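/- arXiv:1607.04852 — 3 statements merged into one kernel-verified Lean document; each statement's English description precedes it below -/
import Mathlib

section
/- Let K be a field of characteristic 0, π ∈ K^×, p an odd or even prime fixed, and α_1,…,α_m, β_1,…,β_n ∈ K. In the localized Weyl algebra B = K⟨x, x^{-1}, ∂⟩, let ι be the K-algebra automorphism determined by ι(x) = x^{-1}, ι(∂) = -x^2∂ (the inversion substitution). Then ι(Hyp_π(α;β)) = u · Hyp_{(-1)^p π}(-β; -α) for a unit u ∈ B, where Hyp_π(α;β) = ∏_{i=1}^m(x∂-α_i) - (-1)^{m+np} π^{m-n} x ∏_{j=1}^n(x∂-β_j), and -α, -β denote the sequences of negated parameters. In particular the left ideals B·ι(Hyp_π(α;β)) and B·Hyp_{(-1)^p π}(-β;-α) coincide. -/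
/-!
Since `ι(x) * ι(∂) = -x⁻¹x²∂ = -x∂`, the inversion sends every factor `x∂ - γ` to `-(x∂ + γ)`.
Hence `ι(Hyp_π(α;β)) = (-1)^m P - c x⁻¹ (-1)^n Q` with `P = ∏(x∂ + αᵢ)`, `Q = ∏(x∂ + βⱼ)`, and
pulling out the unit `-(-1)^n c x⁻¹` on the left leaves `Q - c' x P`, which is
`Hyp_{(-1)^p π}(-β;-α)` because the coefficients satisfy `(-1)^n c c' = (-1)^m`.
-/

/-- The hypergeometric operator `∏ᵢ(x∂-αᵢ) - c·x·∏ⱼ(x∂-βⱼ)`. -/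
noncomputable def hypOp {K A : Type*} [Field K] [Ring A] [Algebra K A]
    (x d : A) {m n : ℕ} (α : Fin m → K) (β : Fin n → K) (c : K) : A :=
  (List.ofFn fun i : Fin m => x * d - algebraMap K A (α i)).prod
    - algebraMap K A c * x * (List.ofFn fun j : Fin n => x * d - algebraMap K A (β j)).prod

/-- The coefficient of `x` in `Hyp_π(α;β)`. -/
def hypCoeff {K : Type*} [Field K] (p m n : ℕ) (π : K) : K :=
  (-1) ^ (m + n * p) * π ^ ((m : ℤ) - (n : ℤ))

theorem neg_one_pow_mul_hypCoeff_mul_hypCoeff {K : Type*} [Field K] (p m n : ℕ) {π : K}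
    (hπ : π ≠ 0) :
    (-1) ^ n * hypCoeff p m n π * hypCoeff p n m ((-1) ^ p * π) = (-1) ^ m := by
  have hne : (-1 : K) ≠ 0 := neg_ne_zero.mpr one_ne_zero
  have hπ_cancel : π ^ ((m : ℤ) - n) * π ^ ((n : ℤ) - m) = 1 := by
    rw [← zpow_add₀ hπ, sub_add_sub_cancel', sub_self, zpow_zero]
  have hexp : (n : ℤ) + ↑(m + n * p) + ↑(n + m * p) + p * (n - m) = m + 2 * (n + n * p) := by
    push_cast; ring
  simp only [hypCoeff, mul_zpow, ← zpow_natCast, ← zpow_mul]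
  calc _ = (-1 : K) ^ ((n : ℤ) + ↑(m + n * p) + ↑(n + m * p) + p * (n - m))
        * (π ^ ((m : ℤ) - n) * π ^ ((n : ℤ) - m)) := by
        simp only [zpow_add₀ hne]; ring
    _ = (-1) ^ (m : ℤ) := by
        rw [hπ_cancel, hexp, zpow_add₀ hne, (even_two_mul _).neg_one_zpow, mul_one, mul_one]

theorem map_prod_ofFn_sub_algebraMap {K A B F : Type*} [CommRing K] [Ring A] [Ring B]
    [Algebra K A] [Algebra K B] [FunLike F A B] [AlgHomClass F K A B] (f : F)
    {θ : A} {θ' : B} (hθ : f θ = -θ') {k : ℕ} (γ : Fin k → K) :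
    f (List.ofFn fun i => θ - algebraMap K A (γ i)).prod
      = (-1 : K) ^ k • (List.ofFn fun i => θ' + algebraMap K B (γ i)).prod := by
  have hfactor : ∀ a : K, f (θ - algebraMap K A a) = -(θ' + algebraMap K B a) := fun a => by
    rw [map_sub, hθ, AlgHomClass.commutes, neg_add']
  rw [map_list_prod, List.map_ofFn, Function.comp_def]
  simp only [hfactor]
  rw [← Function.comp_def Neg.neg, ← List.map_ofFn, List.prod_map_neg, List.length_ofFn,
    Algebra.smul_def, map_pow, map_neg, map_one]

theorem hypOp_neg_neg {K A : Type*} [Field K] [Ring A] [Algebra K A] (x d : A) {m n : ℕ}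
    (α : Fin m → K) (β : Fin n → K) (c : K) :
    hypOp x d (fun j => -β j) (fun i => -α i) c
      = (List.ofFn fun j => x * d + algebraMap K A (β j)).prod
        - algebraMap K A c * x * (List.ofFn fun i => x * d + algebraMap K A (α i)).prod := by
  simp only [hypOp, map_neg, sub_neg_eq_add]

theorem map_hypOp_of_map_eq_inv {K B F : Type*} [Field K] [Ring B] [Algebra K B]
    [FunLike F B B] [AlgHomClass F K B B] (f : F) {x xinv d : B} (hx : xinv * x = 1)
    (hfx : f x = xinv) (hfd : f d = -(x ^ 2 * d)) {m n : ℕ} (α : Fin m → K) (β : Fin n → K)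
    {c c' : K} (hcc' : (-1) ^ n * c * c' = (-1) ^ m) :
    f (hypOp x d α β c)
      = algebraMap K B (-((-1) ^ n * c)) * xinv
        * hypOp x d (fun j => -β j) (fun i => -α i) c' := by
  have hθ : f (x * d) = -(x * d) := by
    rw [map_mul, hfx, hfd, mul_neg, sq, ← mul_assoc, ← mul_assoc, hx, one_mul]
  rw [hypOp_neg_neg, hypOp, map_sub, map_mul, map_mul, AlgHomClass.commutes, hfx,
    map_prod_ofFn_sub_algebraMap f hθ, map_prod_ofFn_sub_algebraMap f hθ]
  simp only [← Algebra.smul_def, mul_sub, mul_smul_comm, smul_mul_assoc]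
  rw [← mul_assoc xinv, hx, one_mul, smul_smul, smul_smul, mul_neg, mul_comm c', hcc']
  module

theorem inv_hypOp_general {K : Type*} [Field K] (p : ℕ)
    (B : Type*) [Ring B] [Algebra K B] (x xinv d : B)
    (hx1 : x * xinv = 1) (hx2 : xinv * x = 1)
    (ι : B ≃ₐ[K] B) (hιx : ι x = xinv) (hιd : ι d = -(x ^ 2 * d))
    {m n : ℕ} (α : Fin m → K) (β : Fin n → K) (π : K) (hπ : π ≠ 0) :
    (∃ u : Bˣ,
      ι (hypOp x d α β ((-1 : K) ^ (m + n * p) * π ^ ((m : ℤ) - (n : ℤ))))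
        = (u : B) * hypOp x d (fun j => -β j) (fun i => -α i)
            ((-1 : K) ^ (n + m * p) * ((-1 : K) ^ p * π) ^ ((n : ℤ) - (m : ℤ))))
    ∧ Ideal.span {ι (hypOp x d α β ((-1 : K) ^ (m + n * p) * π ^ ((m : ℤ) - (n : ℤ))))}
        = Ideal.span {hypOp x d (fun j => -β j) (fun i => -α i)
            ((-1 : K) ^ (n + m * p) * ((-1 : K) ^ p * π) ^ ((n : ℤ) - (m : ℤ)))} := by
  have hcoeff := neg_one_pow_mul_hypCoeff_mul_hypCoeff p m n hπ
  unfold hypCoeff at hcoeff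
  have hscalar_ne : -((-1 : K) ^ n * ((-1) ^ (m + n * p) * π ^ ((m : ℤ) - n))) ≠ 0 :=
    neg_ne_zero.mpr (left_ne_zero_of_mul (hcoeff ▸ pow_ne_zero m (neg_ne_zero.mpr one_ne_zero)))
  obtain ⟨u, hu⟩ := ((IsUnit.mk0 _ hscalar_ne).map (algebraMap K B)).mul
    (⟨⟨xinv, x, hx2, hx1⟩, rfl⟩ : IsUnit xinv)
  have hmap := map_hypOp_of_map_eq_inv ι hx2 hιx hιd α β hcoeff
  exact ⟨⟨u, hu ▸ hmap⟩, by rw [hmap, Ideal.span_singleton_mul_left_unit (hu ▸ u.isUnit)]⟩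

/-- Lemma 3.3(i) of the paper: in the localized Weyl algebra `B = K⟨x,x⁻¹,∂⟩`, the
inversion substitution `ι` (with `ι(x) = x⁻¹`, `ι(∂) = -x²∂`) sends `Hyp_π(α;β)` to a
unit multiple of `Hyp_{(-1)^p π}(-β;-α)`; in particular the two left ideals coincide. -/
theorem inv_hypOp {K : Type*} [Field K] [CharZero K] (p : ℕ) (hp : p.Prime)
    (B : Type*) [Ring B] [Algebra K B] (x xinv d : B)
    (hrel : d * x = x * d + 1) (hx1 : x * xinv = 1) (hx2 : xinv * x = 1)
    (ι : B ≃ₐ[K] B) (hιx : ι x = xinv) (hιd : ι d = -(x ^ 2 * d))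
    {m n : ℕ} (α : Fin m → K) (β : Fin n → K) (π : K) (hπ : π ≠ 0) :
    (∃ u : Bˣ,
      ι (hypOp x d α β ((-1 : K) ^ (m + n * p) * π ^ ((m : ℤ) - (n : ℤ))))
        = (u : B) * hypOp x d (fun j => -β j) (fun i => -α i)
            ((-1 : K) ^ (n + m * p) * ((-1 : K) ^ p * π) ^ ((n : ℤ) - (m : ℤ))))
    ∧ Ideal.span {ι (hypOp x d α β ((-1 : K) ^ (m + n * p) * π ^ ((m : ℤ) - (n : ℤ))))}
        = Ideal.span {hypOp x d (fun j => -β j) (fun i => -α i)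
            ((-1 : K) ^ (n + m * p) * ((-1 : K) ^ p * π) ^ ((n : ℤ) - (m : ℤ)))} :=
  inv_hypOp_general p B x xinv d hx1 hx2 ι hιx hιd α β π hπ
end

section
/- Let K be a field of characteristic 0, π ∈ K^×, and α_2,…,α_m, β_1,…,β_n ∈ K. Let φ_π be the K-algebra automorphism of the Weyl algebra A_1(K) determined by φ_π(x) = -∂/π and φ_π(∂) = πx (the Fourier substitution). Then φ_π(Hyp_{(-1)^p π}(-β_1-1,…,-β_n-1; -α_2-1,…,-α_m-1)) = u · x^{-1} · (x∂·∏_{i=2}^m(x∂-α_i) - (-1)^{m+np}π^{m-n} x ∏_{j=1}^n(x∂-β_j)) = u·x^{-1}·Hyp_π(0,α_2,…,α_m; β_1,…,β_n), where u = (-1)^{n(p-1)+m-1}π^{n-m} is a nonzero scalar (equality holding in the localized algebra K⟨x,x^{-1},∂⟩). -/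
/-!
Under `x ↦ -∂/π`, `∂ ↦ πx` the Euler operator `x∂` goes to `-∂x = -(x∂ + 1)`, so every factor
`x∂ - (-γ - 1)` becomes `-(x∂ - γ)` and the two products of `Hyp_{(-1)^p π}` turn, up to sign,
into the two products of `Hyp_π`, with `∂` in front of the `α`-product. Since `α₁ = 0`, that
product of `Hyp_π` starts with the factor `x∂`, which `x⁻¹` strips off. What remains is to
match the two coefficients, and for the signs this is a parity count of the exponents of `-1`.
-/

lemma neg_one_zpow_eq_of_even_sub {α : Type*} [DivisionMonoid α] [HasDistribNeg α] {a b : ℤ}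
    (h : Even (a - b)) : (-1 : α) ^ a = (-1) ^ b := by
  simp only [neg_one_zpow_eq_ite, Int.even_sub.mp h]

section Scalars

variable {K : Type*} [Field K] {p : ℕ} {π : K}

/- The coefficients of `∂ · ∏ (x∂ - αᵢ)` and of `∏ (x∂ - βⱼ)` on the two sides agree. -/

lemma fourier_scalar_d (hp : 1 ≤ p) (hπ : π ≠ 0) (m n : ℕ) :
    (-1 : K) ^ (n + m * p) * ((-1 : K) ^ p * π) ^ ((n : ℤ) - (m : ℤ)) * π⁻¹ * (-1) ^ m
      = (-1) ^ (n * (p - 1) + m) * π ^ ((n : ℤ) - ((m : ℤ) + 1)) := by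
  have hsign : (-1 : K) ^ ((n + m * p : ℕ) : ℤ) * (-1) ^ ((p : ℤ) * (n - m)) * (-1) ^ (m : ℤ)
      = (-1) ^ ((n * (p - 1) + m : ℕ) : ℤ) := by
    rw [← zpow_add₀ (by norm_num), ← zpow_add₀ (by norm_num)]
    exact neg_one_zpow_eq_of_even_sub ⟨n, by push_cast [Nat.cast_sub hp]; ring⟩
  rw [sub_add_eq_sub_sub, zpow_sub_one₀ hπ, ← zpow_natCast, mul_zpow, ← zpow_natCast,
    ← zpow_mul, ← zpow_natCast, ← zpow_natCast (-1 : K) (n * (p - 1) + m), ← hsign]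
  ring

lemma fourier_scalar_x (hp : 1 ≤ p) (hπ : π ≠ 0) (m n : ℕ) :
    (-1 : K) ^ (n * (p - 1) + m) * π ^ ((n : ℤ) - ((m : ℤ) + 1))
        * ((-1) ^ ((m + 1) + n * p) * π ^ (((m : ℤ) + 1) - (n : ℤ)))
      = -(-1) ^ n := by
  have hπ1 : π ^ ((n : ℤ) - ((m : ℤ) + 1)) * π ^ (((m : ℤ) + 1) - (n : ℤ)) = 1 := by
    rw [← zpow_add₀ hπ, sub_add_sub_cancel', sub_self, zpow_zero]
  have hsign : (-1 : K) ^ (n * (p - 1) + m) * (-1) ^ ((m + 1) + n * p) = -(-1) ^ n := by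
    rw [← pow_add, show -(-1 : K) ^ n = (-1) ^ (n + 1) by ring, ← zpow_natCast, ← zpow_natCast]
    exact neg_one_zpow_eq_of_even_sub ⟨n * p - n + m, by push_cast [Nat.cast_sub hp]; ring⟩
  rw [mul_mul_mul_comm, hsign, hπ1, mul_one]

end Scalars

section Operators

variable {K A : Type*} [Field K] [Ring A] [Algebra K A]

noncomputable def eulerProd (x d : A) {k : ℕ} (γ : Fin k → K) : A :=
  (List.ofFn fun i : Fin k => x * d - algebraMap K A (γ i)).prod

lemma hypOp_eq_eulerProd (x d : A) {m n : ℕ} (α : Fin m → K) (β : Fin n → K) (c : K) :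
    hypOp x d α β c = eulerProd x d α - algebraMap K A c * x * eulerProd x d β :=
  rfl

lemma eulerProd_eq_mul_of_eq_zero (x d : A) {k : ℕ} {γ : Fin (k + 1) → K} (hγ : γ 0 = 0) :
    eulerProd x d γ = x * d * eulerProd x d (fun i => γ i.succ) := by
  rw [eulerProd, List.ofFn_succ, List.prod_cons, hγ, map_zero, sub_zero, eulerProd]

lemma eulerProd_neg_sub_one {X D x d : A} (h : X * D = -(x * d + 1)) {k : ℕ} (γ : Fin k → K) :
    eulerProd X D (fun i => -γ i - 1) = (-1 : K) ^ k • eulerProd x d γ := by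
  have hfactor : ∀ i, X * D - algebraMap K A (-γ i - 1) = -(x * d - algebraMap K A (γ i)) := by
    intro i
    rw [h, map_sub, map_neg, map_one]
    abel
  calc eulerProd X D (fun i => -γ i - 1)
      = ((List.ofFn fun i => x * d - algebraMap K A (γ i)).map Neg.neg).prod := by
        simp only [eulerProd, hfactor, List.map_ofFn, Function.comp_def]
    _ = (-1 : K) ^ k • eulerProd x d γ := by
        rw [List.prod_map_neg, List.length_ofFn, Algebra.smul_def, map_pow, map_neg, map_one,
          eulerProd]

lemma fourier_mul {x d : A} (hrel : d * x = x * d + 1) {π : K} (hπ : π ≠ 0) :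
    (-(π⁻¹) • d) * (π • x) = -(x * d + 1) := by
  rw [smul_mul_smul_comm, hrel, neg_mul, inv_mul_cancel₀ hπ, neg_smul, one_smul]

lemma hypOp_fourier {x d : A} (hrel : d * x = x * d + 1) {π : K} (hπ : π ≠ 0) {k l : ℕ}
    (γ : Fin k → K) (δ : Fin l → K) (c : K) :
    hypOp (-(π⁻¹) • d) (π • x) (fun i => -γ i - 1) (fun j => -δ j - 1) c
      = (-1 : K) ^ k • eulerProd x d γ + (c * π⁻¹ * (-1) ^ l) • (d * eulerProd x d δ) := by
  rw [hypOp_eq_eulerProd, eulerProd_neg_sub_one (fourier_mul hrel hπ),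
    eulerProd_neg_sub_one (fourier_mul hrel hπ)]
  simp only [← Algebra.smul_def, smul_mul_assoc, mul_smul_comm, smul_smul]
  rw [sub_eq_add_neg, ← neg_smul]
  congr 2
  ring

lemma mul_hypOp_of_eq_zero {x xinv d : A} (hx : xinv * x = 1) {m n : ℕ} {α : Fin (m + 1) → K}
    (hα : α 0 = 0) (β : Fin n → K) (c : K) :
    xinv * hypOp x d α β c = d * eulerProd x d (fun i => α i.succ) - c • eulerProd x d β := by
  rw [hypOp_eq_eulerProd, eulerProd_eq_mul_of_eq_zero x d hα, Algebra.commutes, mul_sub,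
    mul_assoc x, mul_assoc x, ← mul_assoc xinv, ← mul_assoc xinv, hx, one_mul, one_mul,
    Algebra.smul_def]

end Operators

theorem fourier_hypOp_general {K : Type*} [Field K] (p : ℕ) (hp : p.Prime)
    (B : Type*) [Ring B] [Algebra K B] (x xinv d : B)
    (hrel : d * x = x * d + 1) (hx2 : xinv * x = 1)
    (π : K) (hπ : π ≠ 0) {m n : ℕ} (α : Fin (m + 1) → K) (hα0 : α 0 = 0)
    (β : Fin n → K) :
    hypOp (-(π⁻¹) • d) (π • x)
        (fun j : Fin n => -β j - 1) (fun i : Fin m => -α i.succ - 1)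
        ((-1 : K) ^ (n + m * p) * ((-1 : K) ^ p * π) ^ ((n : ℤ) - (m : ℤ)))
      = algebraMap K B ((-1 : K) ^ (n * (p - 1) + m) * π ^ ((n : ℤ) - ((m : ℤ) + 1)))
          * (xinv * hypOp x d α β
              ((-1 : K) ^ ((m + 1) + n * p) * π ^ (((m : ℤ) + 1) - (n : ℤ)))) := by
  rw [hypOp_fourier hrel hπ β (fun i => α i.succ), mul_hypOp_of_eq_zero hx2 hα0,
    fourier_scalar_d hp.one_le hπ, ← Algebra.smul_def, smul_sub, smul_smul,
    fourier_scalar_x hp.one_le hπ, neg_smul, sub_neg_eq_add, add_comm]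

/-- The key Fourier-transform computation of Theorem 3.8: substituting
`x ↦ -∂/π`, `∂ ↦ πx` into `Hyp_{(-1)^p π}(-β₁-1,…,-βₙ-1; -α₂-1,…,-α_{m+1}-1)` yields
`(-1)^{n(p-1)+m} π^{n-m-1} · x⁻¹ · Hyp_π(0,α₂,…,α_{m+1}; β₁,…,βₙ)`, computed in the
localized algebra `K⟨x,x⁻¹,∂⟩`. Here `α : Fin (m+1) → K` with `α 0 = 0`. -/
theorem fourier_hypOp {K : Type*} [Field K] [CharZero K] (p : ℕ) (hp : p.Prime)
    (B : Type*) [Ring B] [Algebra K B] (x xinv d : B)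
    (hrel : d * x = x * d + 1) (hx1 : x * xinv = 1) (hx2 : xinv * x = 1)
    (π : K) (hπ : π ≠ 0) {m n : ℕ} (α : Fin (m + 1) → K) (hα0 : α 0 = 0)
    (β : Fin n → K) :
    hypOp (-(π⁻¹) • d) (π • x)
        (fun j : Fin n => -β j - 1) (fun i : Fin m => -α i.succ - 1)
        ((-1 : K) ^ (n + m * p) * ((-1 : K) ^ p * π) ^ ((n : ℤ) - (m : ℤ)))
      = algebraMap K B ((-1 : K) ^ (n * (p - 1) + m) * π ^ ((n : ℤ) - ((m : ℤ) + 1)))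
          * (xinv * hypOp x d α β
              ((-1 : K) ^ ((m + 1) + n * p) * π ^ (((m : ℤ) + 1) - (n : ℤ)))) :=
  fourier_hypOp_general p hp B x xinv d hrel hx2 π hπ α hα0 β
end

section
/- Let K be a field of characteristic 0, and let Hyp = ∏_{i=1}^m(x∂-α_i) - c·x·∏_{j=1}^n(x∂-β_j) ∈ A_1(K) with c ≠ 0 and with no α_i an integer and α_i - β_j never an integer. Then right multiplication by Hyp on the quotient A_1(K)/x·A_1(K) is bijective. -/
/-- The Weyl relation on the free algebra on two generators `x = ι false`, `∂ = ι true`: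
`∂x = x∂ + 1`. -/
inductive WeylRel (K : Type*) [Field K] :
    FreeAlgebra K Bool → FreeAlgebra K Bool → Prop
  | comm : WeylRel K (FreeAlgebra.ι K true * FreeAlgebra.ι K false)
      (FreeAlgebra.ι K false * FreeAlgebra.ι K true + 1)

/-- The Weyl algebra `A₁(K) = K⟨x,∂⟩/(∂x - x∂ - 1)`. -/
abbrev WeylAlgebra (K : Type*) [Field K] := RingQuot (WeylRel K)

/-- The generator `x` of the Weyl algebra. -/
noncomputable def wX (K : Type*) [Field K] : WeylAlgebra K :=
  RingQuot.mkAlgHom K (WeylRel K) (FreeAlgebra.ι K false)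

/-- The generator `∂` of the Weyl algebra. -/
noncomputable def wD (K : Type*) [Field K] : WeylAlgebra K :=
  RingQuot.mkAlgHom K (WeylRel K) (FreeAlgebra.ι K true)

/-- The right ideal `x·A₁(K)`, i.e. the span of `{x}` over `A₁(K)ᵐᵒᵖ`. -/
noncomputable def xWeyl (K : Type*) [Field K] :
    Submodule (WeylAlgebra K)ᵐᵒᵖ (WeylAlgebra K) :=
  Submodule.span (WeylAlgebra K)ᵐᵒᵖ {wX K}

/-!
Let `A₁(K)` act on `K[X]` on the right, `x` acting as `d/dX` and `∂` as multiplication by `X`.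
Since `[p(∂), x] = p'(∂)`, the map `p ↦ p(∂) mod x·A₁(K)` intertwines this action with right
multiplication on `A₁(K)/x·A₁(K)`; it is a bijection, whose inverse sends `P` to the image of `1`
under `P`. The action of `Hyp` sends `X^l` to `∏ᵢ(l - αᵢ) X^l - c l ∏ⱼ(l - 1 - βⱼ) X^(l-1)`, so it
is triangular with respect to the degree, with diagonal entries `∏ᵢ(l - αᵢ) ≠ 0`. Such an operator
is injective (compare leading coefficients), hence surjective on each finite-dimensional
`K[X]_{<d}`.
-/

open Polynomial MulOpposite

namespace Polynomial

section Triangular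

variable {R : Type*} [CommRing R] {T : R[X] →ₗ[R] R[X]} {a : ℕ → R}

theorem map_mem_degreeLT_of_triangular (hT : ∀ l, T (X ^ l) - a l • X ^ l ∈ degreeLT R l)
    {d : ℕ} {p : R[X]} (hp : p ∈ degreeLT R d) : T p ∈ degreeLT R d := by
  classical
  suffices degreeLT R d ≤ (degreeLT R d).comap T from this hp
  rw [degreeLT_eq_span_X_pow, Submodule.span_le]
  intro _ hq
  obtain ⟨l, hl, rfl⟩ := Finset.mem_image.mp hq
  have hld : l < d := Finset.mem_range.mp hl
  rw [SetLike.mem_coe, Submodule.mem_comap, ← sub_add_cancel (T (X ^ l)) (a l • X ^ l),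
    ← degreeLT_eq_span_X_pow]
  refine add_mem (degreeLT_mono hld.le (hT l)) (Submodule.smul_mem _ _ ?_)
  rw [mem_degreeLT]
  exact (degree_X_pow_le l).trans_lt (by exact_mod_cast hld)

theorem coeff_natDegree_of_triangular (hT : ∀ l, T (X ^ l) - a l • X ^ l ∈ degreeLT R l)
    (p : R[X]) : (T p).coeff p.natDegree = a p.natDegree * p.leadingCoeff := by
  set N := p.natDegree
  have herase : p.eraseLead ∈ degreeLT R N := by
    rcases eq_or_ne p 0 with rfl | hp
    · simp
    · rw [mem_degreeLT, ← degree_eq_natDegree hp]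
      exact degree_eraseLead_lt hp
  have coeff_eq_zero {q : R[X]} (hq : q ∈ degreeLT R N) : q.coeff N = 0 :=
    coeff_eq_zero_of_degree_lt (mem_degreeLT.mp hq)
  have hsplit : T p = T p.eraseLead + p.leadingCoeff • (T (X ^ N) - a N • X ^ N)
      + (p.leadingCoeff * a N) • X ^ N := by
    conv_lhs => rw [← eraseLead_add_C_mul_X_pow p, ← smul_eq_C_mul, map_add, map_smul]
    rw [smul_sub, smul_smul]
    abel
  rw [hsplit, coeff_add, coeff_add, coeff_eq_zero (map_mem_degreeLT_of_triangular hT herase),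
    coeff_smul, coeff_eq_zero (hT N), coeff_smul, coeff_X_pow_self]
  simp [mul_comm]

end Triangular

theorem bijective_of_triangular {K : Type*} [Field K] {T : K[X] →ₗ[K] K[X]} {a : ℕ → K}
    (hT : ∀ l, T (X ^ l) - a l • X ^ l ∈ degreeLT K l) (ha : ∀ l, a l ≠ 0) :
    Function.Bijective T := by
  have hinj : Function.Injective T := by
    refine (injective_iff_map_eq_zero T).mpr fun p hp => ?_
    have h := coeff_natDegree_of_triangular hT p
    rw [hp, coeff_zero, eq_comm, mul_eq_zero] at h
    exact leadingCoeff_eq_zero.mp (h.resolve_left (ha _))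
  refine ⟨hinj, fun q => ?_⟩
  set d := q.natDegree + 1
  have hq : q ∈ degreeLT K d := by
    rw [mem_degreeLT]
    exact (degree_le_natDegree).trans_lt (by exact_mod_cast Nat.lt_succ_self _)
  let Td := T.restrict (p := degreeLT K d) (q := degreeLT K d) fun _ hp =>
    map_mem_degreeLT_of_triangular hT hp
  have hTd : Function.Surjective Td :=
    LinearMap.injective_iff_surjective.mp fun p p' h => Subtype.ext (hinj (congrArg Subtype.val h))
  obtain ⟨p, hp⟩ := hTd ⟨q, hq⟩
  exact ⟨p, congrArg Subtype.val hp⟩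

theorem aeval_mul_eq_add_aeval_derivative {R A : Type*} [CommSemiring R] [Semiring A]
    [Algebra R A] {x d : A} (h : d * x = x * d + 1) (p : R[X]) :
    aeval d p * x = x * aeval d p + aeval d (derivative p) := by
  induction p using Polynomial.induction_on with
  | C a => simp [Algebra.commutes]
  | add p q hp hq =>
    simp only [map_add, add_mul, mul_add, hp, hq]
    abel
  | monomial n a ih =>
    rw [pow_succ, ← mul_assoc]
    generalize C a * X ^ n = q at ih ⊢
    rw [derivative_mul, derivative_X, mul_one, map_add, map_mul, map_mul, aeval_X, mul_assoc, h,
      mul_add, mul_one, ← mul_assoc, ih]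
    simp only [add_mul, mul_assoc]
    abel

end Polynomial

namespace WeylAlgebra

variable {K : Type*} [Field K]

theorem wD_mul_wX : wD K * wX K = wX K * wD K + 1 := by
  simpa only [wD, wX, map_mul, map_add, map_one] using
    RingQuot.mkAlgHom_rel K (WeylRel.comm (K := K))

noncomputable def polyRep : WeylAlgebra K →ₐ[K] (Module.End K K[X])ᵐᵒᵖ :=
  RingQuot.liftAlgHom K ⟨FreeAlgebra.lift K fun b =>
    if b then op (LinearMap.mulLeft K X) else op (derivative : Module.End K K[X]), by
      rintro _ _ ⟨⟩
      simp only [map_mul, map_add, map_one, FreeAlgebra.lift_ι_apply, if_true,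
        Bool.false_eq_true, if_false, ← op_mul, ← op_one, ← op_add, op_inj]
      refine LinearMap.ext fun p => ?_
      simp only [Module.End.mul_apply, LinearMap.mulLeft_apply, LinearMap.add_apply,
        Module.End.one_apply]
      rw [derivative_mul, derivative_X, one_mul, add_comm]⟩

theorem polyRep_wX : polyRep (wX K) = op (derivative : Module.End K K[X]) := by
  simp [polyRep, wX]

theorem polyRep_wD : polyRep (wD K) = op (LinearMap.mulLeft K (X : K[X])) := by
  simp [polyRep, wD]

theorem polyRep_mul_apply (P Q : WeylAlgebra K) (p : K[X]) :
    (polyRep (P * Q)).unop p = (polyRep Q).unop ((polyRep P).unop p) := by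
  rw [map_mul, unop_mul, Module.End.mul_apply]

theorem polyRep_algebraMap_apply (r : K) (p : K[X]) :
    (polyRep (algebraMap K (WeylAlgebra K) r)).unop p = r • p := by
  rw [AlgHom.commutes]
  rfl

theorem polyRep_apply_one_eq_zero_of_mem {P : WeylAlgebra K} (hP : P ∈ xWeyl K) :
    (polyRep P).unop 1 = 0 := by
  obtain ⟨Q, rfl⟩ := Submodule.mem_span_singleton.mp hP
  rw [← op_unop Q, op_smul_eq_mul, polyRep_mul_apply, polyRep_wX, unop_op,
    derivative_one, map_zero]

theorem polyRep_aeval_wD_apply_one (p : K[X]) : (polyRep (aeval (wD K) p)).unop 1 = p := by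
  induction p using Polynomial.induction_on with
  | C a => rw [aeval_C, polyRep_algebraMap_apply, smul_eq_C_mul, mul_one]
  | add p q hp hq => rw [map_add, map_add, unop_add, LinearMap.add_apply, hp, hq]
  | monomial n a ih =>
    rw [pow_succ, ← mul_assoc, map_mul, aeval_X, polyRep_mul_apply, ih, polyRep_wD, unop_op,
      LinearMap.mulLeft_apply, mul_comm]

noncomputable def polyToQuotient (p : K[X]) : WeylAlgebra K ⧸ xWeyl K :=
  Submodule.Quotient.mk (aeval (wD K) p)

theorem polyToQuotient_polyRep (P : WeylAlgebra K) (p : K[X]) :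
    polyToQuotient ((polyRep P).unop p) = op P • polyToQuotient p := by
  obtain ⟨f, rfl⟩ := RingQuot.mkAlgHom_surjective K (WeylRel K) P
  induction f generalizing p with
  | grade0 r =>
    rw [AlgHom.commutes, polyRep_algebraMap_apply, polyToQuotient, polyToQuotient,
      ← Submodule.Quotient.mk_smul, op_smul_eq_mul, map_smul, ← Algebra.commutes,
      ← Algebra.smul_def]
  | grade1 b =>
    cases b
    · have hx : aeval (wD K) p * wX K - aeval (wD K) (derivative p) ∈ xWeyl K := by
        rw [aeval_mul_eq_add_aeval_derivative wD_mul_wX, add_sub_cancel_right]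
        exact Submodule.mem_span_singleton.mpr ⟨op (aeval (wD K) p), rfl⟩
      rw [← wX, polyRep_wX, unop_op, polyToQuotient, polyToQuotient, ← Submodule.Quotient.mk_smul,
        op_smul_eq_mul, eq_comm, Submodule.Quotient.eq]
      exact hx
    · rw [← wD, polyRep_wD, unop_op, LinearMap.mulLeft_apply, mul_comm, polyToQuotient,
        polyToQuotient, map_mul, aeval_X, ← Submodule.Quotient.mk_smul, op_smul_eq_mul]
  | mul f g hf hg =>
    rw [map_mul, polyRep_mul_apply, hg, hf, op_mul, mul_smul]
  | add f g hf hg =>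
    simp only [polyToQuotient] at hf hg ⊢
    rw [map_add, map_add, unop_add, LinearMap.add_apply, map_add, Submodule.Quotient.mk_add, hf,
      hg, op_add, add_smul]

theorem polyToQuotient_polyRep_apply_one (P : WeylAlgebra K) :
    polyToQuotient ((polyRep P).unop 1) = Submodule.Quotient.mk P := by
  rw [polyToQuotient_polyRep, polyToQuotient, map_one, ← Submodule.Quotient.mk_smul,
    op_smul_eq_mul, one_mul]

theorem polyToQuotient_bijective : Function.Bijective (polyToQuotient (K := K)) := by
  refine ⟨fun p q hpq => ?_, fun P => ?_⟩
  · rw [polyToQuotient, polyToQuotient, Submodule.Quotient.eq] at hpq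
    have := polyRep_apply_one_eq_zero_of_mem hpq
    rwa [map_sub, unop_sub, LinearMap.sub_apply, polyRep_aeval_wD_apply_one,
      polyRep_aeval_wD_apply_one, sub_eq_zero] at this
  · obtain ⟨P, rfl⟩ := Submodule.Quotient.mk_surjective _ P
    exact ⟨_, polyToQuotient_polyRep_apply_one P⟩

theorem polyRep_theta_sub_apply_X_pow (γ : K) (l : ℕ) :
    (polyRep (wX K * wD K - algebraMap K (WeylAlgebra K) γ)).unop (X ^ l)
      = ((l : K) - γ) • X ^ l := by
  rw [map_sub, unop_sub, LinearMap.sub_apply, polyRep_mul_apply, polyRep_wX, polyRep_wD, unop_op,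
    unop_op, LinearMap.mulLeft_apply, polyRep_algebraMap_apply, derivative_X_pow, sub_smul]
  congr 1
  rcases l with _ | l
  · simp
  · rw [smul_eq_C_mul, Nat.add_sub_cancel]
    ring

theorem polyRep_prod_theta_sub_apply_X_pow {k : ℕ} (γ : Fin k → K) (l : ℕ) :
    (polyRep (List.ofFn fun i => wX K * wD K - algebraMap K (WeylAlgebra K) (γ i)).prod).unop
      (X ^ l) = (∏ i, ((l : K) - γ i)) • X ^ l := by
  induction k with
  | zero => simp
  | succ k ih =>
    rw [List.ofFn_succ, List.prod_cons, polyRep_mul_apply, polyRep_theta_sub_apply_X_pow,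
      map_smul, ih, smul_smul, Fin.prod_univ_succ, mul_comm]

theorem polyRep_hypOp_apply_X_pow {m n : ℕ} (α : Fin m → K) (β : Fin n → K) (c : K) (l : ℕ) :
    (polyRep (hypOp (wX K) (wD K) α β c)).unop (X ^ l)
      = (∏ i, ((l : K) - α i)) • X ^ l
        - (c * l * ∏ j, (((l - 1 : ℕ) : K) - β j)) • X ^ (l - 1) := by
  rw [hypOp, map_sub, unop_sub, LinearMap.sub_apply, polyRep_prod_theta_sub_apply_X_pow,
    polyRep_mul_apply, polyRep_mul_apply, polyRep_algebraMap_apply, polyRep_wX, unop_op,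
    map_smul, derivative_X_pow, ← smul_eq_C_mul, smul_smul, map_smul,
    polyRep_prod_theta_sub_apply_X_pow, smul_smul]

theorem polyRep_hypOp_apply_X_pow_sub_mem_degreeLT {m n : ℕ} (α : Fin m → K) (β : Fin n → K)
    (c : K) (l : ℕ) :
    (polyRep (hypOp (wX K) (wD K) α β c)).unop (X ^ l) - (∏ i, ((l : K) - α i)) • X ^ l
      ∈ degreeLT K l := by
  rw [polyRep_hypOp_apply_X_pow, sub_sub_cancel_left, neg_mem_iff]
  rcases l with _ | l
  · simp
  · refine Submodule.smul_mem _ _ (mem_degreeLT.mpr ?_)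
    rw [Nat.add_sub_cancel]
    exact (degree_X_pow_le l).trans_lt (by exact_mod_cast Nat.lt_succ_self l)

end WeylAlgebra

open WeylAlgebra in
theorem rightMul_hyp_bijective_on_quotient_general {K : Type*} [Field K]
    {m n : ℕ} (α : Fin m → K) (β : Fin n → K) (c : K)
    (hα : ∀ i, ∀ z : ℤ, α i ≠ (z : K)) :
    Function.Bijective
      (fun P : WeylAlgebra K ⧸ xWeyl K =>
        (MulOpposite.op (hypOp (wX K) (wD K) α β c)) • P) := by
  have hdiag (l : ℕ) : ∏ i, ((l : K) - α i) ≠ 0 :=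
    Finset.prod_ne_zero_iff.mpr fun i _ h => hα i l (by rw [← sub_eq_zero.mp h, Int.cast_natCast])
  have hT := bijective_of_triangular (polyRep_hypOp_apply_X_pow_sub_mem_degreeLT α β c) hdiag
  have hconj : (fun P => op (hypOp (wX K) (wD K) α β c) • P) ∘ polyToQuotient
      = polyToQuotient ∘ (polyRep (hypOp (wX K) (wD K) α β c)).unop :=
    funext fun p => (polyToQuotient_polyRep _ p).symm
  rw [← Function.Bijective.of_comp_iff _ polyToQuotient_bijective, hconj]
  exact polyToQuotient_bijective.comp hT

/-- [Katz, ESDE 2.9.4]: if no `αᵢ` is an integer and no `αᵢ - βⱼ` is an integer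
(and `c ≠ 0`), then right multiplication by `Hyp = ∏ᵢ(x∂-αᵢ) - c·x·∏ⱼ(x∂-βⱼ)` is
bijective on the quotient `A₁(K)/x·A₁(K)`. -/
theorem rightMul_hyp_bijective_on_quotient {K : Type*} [Field K] [CharZero K]
    {m n : ℕ} (α : Fin m → K) (β : Fin n → K) (c : K) (hc : c ≠ 0)
    (hα : ∀ i, ∀ z : ℤ, α i ≠ (z : K))
    (hαβ : ∀ i j, ∀ z : ℤ, α i - β j ≠ (z : K)) :
    Function.Bijective
      (fun P : WeylAlgebra K ⧸ xWeyl K =>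
        (MulOpposite.op (hypOp (wX K) (wD K) α β c)) • P) :=
  rightMul_hyp_bijective_on_quotient_general α β c hα
end
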